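/- arXiv:2508.18800 — 3 statements merged into one kernel-verified Lean document; each statement's English description precedes it below -/
import Mathlib

section
/- Let f(s) = -2s³ + 3s² - s and let γ > 0, and define s(z) = ½(1 + tanh(γz/2)). If γ² = 1/(1 + 2L/3) for a constant L with 1 + 2L/3 > 0, then s satisfies (1 + 2L/3)·s''(z) + f(s(z)) = 0 for all z ∈ ℝ, together with s(-∞) = 0 and s(+∞) = 1. -/
/-- The standard transition profile `s(z) = (1 + tanh(γ z / 2)) / 2`. -/
noncomputable def sProfile (γ z : ℝ) : ℝ := (1 + Real.tanh (γ * z / 2)) / 2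

/-- The cubic nonlinearity `f(s) = -2 s³ + 3 s² - s`. -/
def fCubic (s : ℝ) : ℝ := -2 * s ^ 3 + 3 * s ^ 2 - s

/-!
The profile is the rescaled logistic function `s(z) = σ(γ z)`, which solves the logistic
equation `s' = γ s (1 - s)`. Differentiating once more gives `s'' = γ² s (1 - s) (1 - 2 s)`,
and `f(s) = -s (1 - s) (1 - 2 s)`, so the equation reduces to `(1 + 2L/3) γ² = 1`.
-/

open Real Filter

lemma Real.one_add_tanh_half_div_two (x : ℝ) : (1 + tanh (x / 2)) / 2 = sigmoid x := by
  have hx : exp (-x) = (exp (x / 2) ^ 2)⁻¹ := by rw [← exp_nat_mul, ← exp_neg]; ring_nf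
  rw [tanh_eq_sinh_div_cosh, sinh_eq, cosh_eq, sigmoid_def, exp_neg (x / 2), hx]
  field_simp
  ring

lemma sProfile_eq_sigmoid (γ : ℝ) : sProfile γ = fun z => sigmoid (γ * z) := by
  funext z
  rw [sProfile, mul_div_assoc, ← mul_div_assoc, Real.one_add_tanh_half_div_two]

lemma fCubic_eq (s : ℝ) : fCubic s = -(s * (1 - s) * (1 - 2 * s)) := by
  unfold fCubic; ring

lemma hasDerivAt_sigmoid_const_mul (c z : ℝ) :
    HasDerivAt (fun z => sigmoid (c * z)) (c * (sigmoid (c * z) * (1 - sigmoid (c * z)))) z := by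
  have h := (hasDerivAt_sigmoid (c * z)).comp z ((hasDerivAt_id' z).const_mul c)
  rwa [mul_one, mul_comm] at h

lemma deriv_deriv_of_logistic {u : ℝ → ℝ} {c : ℝ}
    (hu : ∀ z, HasDerivAt u (c * (u z * (1 - u z))) z) (z : ℝ) :
    deriv (deriv u) z = c ^ 2 * (u z * (1 - u z) * (1 - 2 * u z)) := by
  have hderiv : deriv u = fun z => c * (u z * (1 - u z)) := funext fun z => (hu z).deriv
  rw [hderiv]
  have h : HasDerivAt (fun z => c * (u z * (1 - u z)))
      (c * (c * (u z * (1 - u z)) * (1 - u z) + u z * -(c * (u z * (1 - u z))))) z :=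
    ((hu z).mul ((hu z).const_sub 1)).const_mul c
  rw [h.deriv]
  ring

theorem stmt0 (L γ : ℝ) (hL : 0 < 1 + 2 * L / 3) (hγ : 0 < γ)
    (hγ2 : γ ^ 2 = 1 / (1 + 2 * L / 3)) :
    (∀ z : ℝ,
      (1 + 2 * L / 3) * deriv (deriv (sProfile γ)) z + fCubic (sProfile γ z) = 0) ∧
    Filter.Tendsto (sProfile γ) Filter.atBot (nhds 0) ∧
    Filter.Tendsto (sProfile γ) Filter.atTop (nhds 1) := by
  have hscale : (1 + 2 * L / 3) * γ ^ 2 = 1 := by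
    rw [hγ2, mul_one_div, div_self hL.ne']
  rw [sProfile_eq_sigmoid]
  refine ⟨fun z => ?_, ?_, ?_⟩
  · rw [deriv_deriv_of_logistic (hasDerivAt_sigmoid_const_mul γ) z, fCubic_eq, ← mul_assoc,
      hscale]
    ring
  · exact tendsto_sigmoid_atBot.comp (tendsto_id.const_mul_atBot hγ)
  · exact tendsto_sigmoid_atTop.comp (tendsto_id.const_mul_atTop hγ)
end

section
/- Let Q₀ = s(n⊗n - I/3) with s ∈ ℝ and n a unit vector, and let Q be any symmetric traceless 3×3 matrix. Define H_{Q₀}Q = -Q - 9((2/3)I(Q:Q₀) - QQ₀ - Q₀Q) - 3(Q|Q₀|² + 2Q₀(Q:Q₀)). Writing Q = q₀E⁰ + q₁E¹ + q₂E² + q₃E³ + q₄E⁴ in the orthogonal frame basis, one has H_{Q₀}Q : Q = -(2/3)(1 - 6s + 6s²)q₀² - 2(1 - 3s + 2s²)(q₁² + q₂²) - 2(1 + 6s + 2s²)(q₃² + q₄²). -/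
open Matrix

/-- The Frobenius pairing `A : B = Tr (A B)`. -/
noncomputable def frob (A B : Matrix (Fin 3) (Fin 3) ℝ) : ℝ := (A * B).trace

lemma vecMulVec_conj14 (A : Matrix (Fin 3) (Fin 3) ℝ) (a b : Fin 3 → ℝ) :
    A * vecMulVec a b * Aᵀ = vecMulVec (A *ᵥ a) (A *ᵥ b) := by
  ext i j
  simp [mul_apply, vecMulVec_apply, mulVec, dotProduct, Fin.sum_univ_three, transpose_apply]
  ring

lemma conjMul14 (B X Y : Matrix (Fin 3) (Fin 3) ℝ) (hB : Bᵀ * B = 1) :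
    B * X * Bᵀ * (B * Y * Bᵀ) = B * (X * Y) * Bᵀ := by
  rw [mul_assoc (B * X) Bᵀ (B * Y * Bᵀ), ← mul_assoc Bᵀ (B * Y) Bᵀ,
    ← mul_assoc Bᵀ B Y, hB, one_mul]
  noncomm_ring

lemma frob_conj14 (B X Y : Matrix (Fin 3) (Fin 3) ℝ) (hB : Bᵀ * B = 1) :
    frob (B * X * Bᵀ) (B * Y * Bᵀ) = frob X Y := by
  unfold frob
  rw [conjMul14 B X Y hB, trace_mul_comm, ← mul_assoc, ← mul_assoc, hB, one_mul]

noncomputable def F0_14 : Matrix (Fin 3) (Fin 3) ℝ :=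
  vecMulVec ![1,0,0] ![1,0,0] - (3:ℝ)⁻¹ • 1
noncomputable def F1_14 : Matrix (Fin 3) (Fin 3) ℝ :=
  vecMulVec ![1,0,0] ![0,1,0] + vecMulVec ![0,1,0] ![1,0,0]
noncomputable def F2_14 : Matrix (Fin 3) (Fin 3) ℝ :=
  vecMulVec ![1,0,0] ![0,0,1] + vecMulVec ![0,0,1] ![1,0,0]
noncomputable def F3_14 : Matrix (Fin 3) (Fin 3) ℝ :=
  vecMulVec ![0,0,1] ![0,1,0] + vecMulVec ![0,1,0] ![0,0,1]
noncomputable def F4_14 : Matrix (Fin 3) (Fin 3) ℝ :=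
  vecMulVec ![0,1,0] ![0,1,0] - vecMulVec ![0,0,1] ![0,0,1]
noncomputable def QF_14 (a b c d e : ℝ) : Matrix (Fin 3) (Fin 3) ℝ :=
  a • F0_14 + b • F1_14 + c • F2_14 + d • F3_14 + e • F4_14

lemma frob_QF_14 (a b c d e a' b' c' d' e' : ℝ) :
    frob (QF_14 a b c d e) (QF_14 a' b' c' d' e') =
      2/3 * (a * a') + 2 * (b * b') + 2 * (c * c') + 2 * (d * d') + 2 * (e * e') := by
  simp [frob, QF_14, F0_14, F1_14, F2_14, F3_14, F4_14, Matrix.trace, Matrix.diag,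
    mul_apply, Fin.sum_univ_three, vecMulVec_apply, Matrix.one_apply]
  ring

lemma final_14 (s a b c d e : ℝ) :
    frob (-(QF_14 a b c d e)
        - (9:ℝ) • (((2/3) * (2/3*(a*s))) • (1 : Matrix (Fin 3) (Fin 3) ℝ)
            - QF_14 a b c d e * QF_14 s 0 0 0 0 - QF_14 s 0 0 0 0 * QF_14 a b c d e)
        - (3:ℝ) • ((2/3*s^2) • QF_14 a b c d e + (2*(2/3*(a*s))) • QF_14 s 0 0 0 0))
      (QF_14 a b c d e) =
      -(2 / 3) * (1 - 6 * s + 6 * s ^ 2) * a ^ 2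
        - 2 * (1 - 3 * s + 2 * s ^ 2) * (b ^ 2 + c ^ 2)
        - 2 * (1 + 6 * s + 2 * s ^ 2) * (d ^ 2 + e ^ 2) := by
  simp [frob, QF_14, F0_14, F1_14, F2_14, F3_14, F4_14, Matrix.trace, Matrix.diag,
    mul_apply, Fin.sum_univ_three, vecMulVec_apply, Matrix.one_apply]
  ring

theorem stmt14 (n l m : Fin 3 → ℝ)
    (hn : n ⬝ᵥ n = 1) (hl : l ⬝ᵥ l = 1) (hm : m ⬝ᵥ m = 1)
    (hnl : n ⬝ᵥ l = 0) (hnm : n ⬝ᵥ m = 0) (hlm : l ⬝ᵥ m = 0)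
    (hlm' : crossProduct l m = n) (hmn : crossProduct m n = l)
    (hnl' : crossProduct n l = m)
    (s q0 q1 q2 q3 q4 : ℝ)
    (E0 E1 E2 E3 E4 Q Q0 H : Matrix (Fin 3) (Fin 3) ℝ)
    (hE0 : E0 = vecMulVec n n - (3 : ℝ)⁻¹ • (1 : Matrix (Fin 3) (Fin 3) ℝ))
    (hE1 : E1 = vecMulVec n l + vecMulVec l n)
    (hE2 : E2 = vecMulVec n m + vecMulVec m n)
    (hE3 : E3 = vecMulVec m l + vecMulVec l m)
    (hE4 : E4 = vecMulVec l l - vecMulVec m m)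
    (hQ : Q = q0 • E0 + q1 • E1 + q2 • E2 + q3 • E3 + q4 • E4)
    (hQ0 : Q0 = s • E0)
    (hH : H = -Q - (9 : ℝ) • (((2 / 3) * frob Q Q0) • (1 : Matrix (Fin 3) (Fin 3) ℝ)
        - Q * Q0 - Q0 * Q) - (3 : ℝ) • ((frob Q0 Q0) • Q + (2 * frob Q Q0) • Q0)) :
    frob H Q =
      -(2 / 3) * (1 - 6 * s + 6 * s ^ 2) * q0 ^ 2
        - 2 * (1 - 3 * s + 2 * s ^ 2) * (q1 ^ 2 + q2 ^ 2)
        - 2 * (1 + 6 * s + 2 * s ^ 2) * (q3 ^ 2 + q4 ^ 2) := by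
  set B : Matrix (Fin 3) (Fin 3) ℝ := Matrix.of ![n, l, m] with hBdef
  have hBBt : B * Bᵀ = 1 := by
    ext i j
    simp only [dotProduct, Fin.sum_univ_three] at hn hl hm hnl hnm hlm
    fin_cases i <;> fin_cases j <;>
      simp [hBdef, mul_apply, transpose_apply, Fin.sum_univ_three, Matrix.one_apply,
        Matrix.vecHead, Matrix.vecTail] <;> linarith
  have hBtB : Bᵀ * B = 1 := by
    rw [mul_eq_one_comm] at hBBt; exact hBBt
  have hBn : B *ᵥ n = ![1, 0, 0] := by
    funext i
    simp only [dotProduct, Fin.sum_univ_three] at hn hnl hnm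
    fin_cases i <;> simp [hBdef, mulVec, dotProduct, Fin.sum_univ_three] <;> linarith
  have hBl : B *ᵥ l = ![0, 1, 0] := by
    funext i
    simp only [dotProduct, Fin.sum_univ_three] at hl hnl hlm
    fin_cases i <;> simp [hBdef, mulVec, dotProduct, Fin.sum_univ_three] <;> linarith
  have hBm : B *ᵥ m = ![0, 0, 1] := by
    funext i
    simp only [dotProduct, Fin.sum_univ_three] at hm hnm hlm
    fin_cases i <;> simp [hBdef, mulVec, dotProduct, Fin.sum_univ_three] <;> linarith
  have hcE0 : B * E0 * Bᵀ = F0_14 := by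
    unfold F0_14
    rw [hE0, Matrix.mul_sub, Matrix.sub_mul, vecMulVec_conj14, hBn,
      Matrix.mul_smul, Matrix.mul_one, Matrix.smul_mul, hBBt]
  have hcE1 : B * E1 * Bᵀ = F1_14 := by
    unfold F1_14
    rw [hE1, Matrix.mul_add, Matrix.add_mul, vecMulVec_conj14, vecMulVec_conj14, hBn, hBl]
  have hcE2 : B * E2 * Bᵀ = F2_14 := by
    unfold F2_14
    rw [hE2, Matrix.mul_add, Matrix.add_mul, vecMulVec_conj14, vecMulVec_conj14, hBn, hBm]
  have hcE3 : B * E3 * Bᵀ = F3_14 := by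
    unfold F3_14
    rw [hE3, Matrix.mul_add, Matrix.add_mul, vecMulVec_conj14, vecMulVec_conj14, hBm, hBl]
  have hcE4 : B * E4 * Bᵀ = F4_14 := by
    unfold F4_14
    rw [hE4, Matrix.mul_sub, Matrix.sub_mul, vecMulVec_conj14, vecMulVec_conj14, hBl, hBm]
  have hcQ : B * Q * Bᵀ = QF_14 q0 q1 q2 q3 q4 := by
    unfold QF_14
    rw [hQ]
    simp only [Matrix.mul_add, Matrix.add_mul, Matrix.mul_smul, Matrix.smul_mul,
      hcE0, hcE1, hcE2, hcE3, hcE4]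
  have hcQ0 : B * Q0 * Bᵀ = QF_14 s 0 0 0 0 := by
    rw [hQ0, Matrix.mul_smul, Matrix.smul_mul, hcE0]
    simp [QF_14]
  have hfQQ0 : frob Q Q0 = 2/3*(q0*s) := by
    rw [← frob_conj14 B Q Q0 hBtB, hcQ, hcQ0, frob_QF_14]; ring
  have hfQ0Q0 : frob Q0 Q0 = 2/3*s^2 := by
    rw [← frob_conj14 B Q0 Q0 hBtB, hcQ0, frob_QF_14]; ring
  have hQQ0 : B * (Q * Q0) * Bᵀ = QF_14 q0 q1 q2 q3 q4 * QF_14 s 0 0 0 0 := by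
    rw [← conjMul14 B Q Q0 hBtB, hcQ, hcQ0]
  have hQ0Q : B * (Q0 * Q) * Bᵀ = QF_14 s 0 0 0 0 * QF_14 q0 q1 q2 q3 q4 := by
    rw [← conjMul14 B Q0 Q hBtB, hcQ, hcQ0]
  have hcH : B * H * Bᵀ =
      -(QF_14 q0 q1 q2 q3 q4)
        - (9:ℝ) • (((2/3) * (2/3*(q0*s))) • (1 : Matrix (Fin 3) (Fin 3) ℝ)
            - QF_14 q0 q1 q2 q3 q4 * QF_14 s 0 0 0 0
            - QF_14 s 0 0 0 0 * QF_14 q0 q1 q2 q3 q4)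
        - (3:ℝ) • ((2/3*s^2) • QF_14 q0 q1 q2 q3 q4
            + (2*(2/3*(q0*s))) • QF_14 s 0 0 0 0) := by
    rw [hH, hfQQ0, hfQ0Q0]
    simp only [Matrix.mul_sub, Matrix.sub_mul, Matrix.mul_add, Matrix.add_mul,
      Matrix.mul_neg, Matrix.neg_mul, Matrix.mul_smul, Matrix.smul_mul, Matrix.mul_one,
      hBBt, hQQ0, hQ0Q, hcQ, hcQ0]
  rw [← frob_conj14 B H Q hBtB, hcH, hcQ]
  exact final_14 s q0 q1 q2 q3 q4
end

section
/- Let I = [-1,1], γ > 0, and ε > 0 small, and set ξ₀(r) = s'(r/ε) where s(z) = ½(1 + tanh(γz/2)). Then |ξ₀(±1)·ξ₀'(±1)| ≤ γ³ e^{-2γ/ε}/ε, and ∫₀¹ ξ₀(r)^{-2} dr = (ε e^{2γ/ε}/(2γ³))·(1 + O(e^{-γ/ε})) as ε → 0. -/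
/-- The rescaled derivative profile `ξ₀(r) = s'(r/ε)`. -/
noncomputable def xiZero (γ ε r : ℝ) : ℝ := deriv (sProfile γ) (r / ε)

/-!
With `w = γ z / 2` one has `s' = γ / (4 cosh² w)` and `s'' = -γ² sinh w / (4 cosh³ w)`, so
`|s' s''| ≤ (γ³/16) / cosh⁴ w ≤ γ³ e^{-4|w|}` because `e^{|w|} ≤ 2 cosh w`; rescaling
`z = r/ε` gives the boundary bound at `r = ±1`. For the integral, `ξ₀⁻² = (16/γ²) cosh⁴(a r)`
with `a = γ/(2ε)`, and `cosh⁴` integrates in closed form via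
`cosh⁴ x = 3/8 + cosh 2x / 2 + cosh 4x / 8`. The term `sinh(4a)/(32a)` carries the
leading order `e^{4a}/(64a)`, and everything else is `O(e^{2a}/a)` since `2a ≤ e^{2a}`.
-/

open Real

theorem Real.hasDerivAt_tanh (x : ℝ) : HasDerivAt tanh (cosh x ^ 2)⁻¹ x := by
  rw [show tanh = fun y => sinh y / cosh y from funext tanh_eq_sinh_div_cosh]
  refine ((hasDerivAt_sinh x).div (hasDerivAt_cosh x) (cosh_pos x).ne').congr_deriv ?_
  rw [← sq, ← sq, cosh_sq_sub_sinh_sq, one_div]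

theorem abs_sinh_div_cosh_pow_five_le (w : ℝ) :
    |sinh w| / cosh w ^ 5 ≤ 16 * exp (-4 * |w|) := by
  have hc := cosh_pos w
  have hsinh : |sinh w| ≤ cosh w := by
    rw [abs_sinh, ← cosh_abs]; exact (sinh_lt_cosh _).le
  have hexp : exp |w| ≤ 2 * cosh w := by
    rw [← cosh_abs, cosh_eq]; linarith [exp_pos (-|w|)]
  have hexp4 : exp (4 * |w|) ≤ 16 * cosh w ^ 4 := by
    rw [show 4 * |w| = (4 : ℕ) * |w| by norm_num, exp_nat_mul]
    nlinarith [pow_le_pow_left₀ (exp_pos |w|).le hexp 4]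
  calc |sinh w| / cosh w ^ 5 ≤ cosh w / cosh w ^ 5 := by gcongr
    _ = 16 / (16 * cosh w ^ 4) := by field_simp
    _ ≤ 16 / exp (4 * |w|) := by gcongr
    _ = 16 * exp (-4 * |w|) := by rw [div_eq_mul_inv, ← exp_neg, neg_mul]

section Profile

variable (γ : ℝ)

theorem hasDerivAt_sProfile (z : ℝ) :
    HasDerivAt (sProfile γ) (γ / (4 * cosh (γ * z / 2) ^ 2)) z := by
  have hlin : HasDerivAt (fun z : ℝ => γ * z / 2) (γ / 2) z := by
    simpa using ((hasDerivAt_id z).const_mul γ).div_const 2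
  refine ((((hasDerivAt_tanh _).comp z hlin).const_add 1).div_const 2).congr_deriv ?_
  field_simp
  ring

theorem deriv_sProfile : deriv (sProfile γ) = fun z => γ / (4 * cosh (γ * z / 2) ^ 2) :=
  funext fun z => (hasDerivAt_sProfile γ z).deriv

theorem hasDerivAt_deriv_sProfile (z : ℝ) :
    HasDerivAt (deriv (sProfile γ))
      (-(γ ^ 2 * sinh (γ * z / 2)) / (4 * cosh (γ * z / 2) ^ 3)) z := by
  have hlin : HasDerivAt (fun z : ℝ => γ * z / 2) (γ / 2) z := by
    simpa using ((hasDerivAt_id z).const_mul γ).div_const 2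
  have hc := (cosh_pos (γ * z / 2)).ne'
  rw [deriv_sProfile]
  refine ((hasDerivAt_const z γ).div ((hlin.cosh.pow 2).const_mul 4)
    (mul_ne_zero four_ne_zero (pow_ne_zero 2 hc))).congr_deriv ?_
  simp only [Pi.pow_apply]
  field_simp
  ring

theorem abs_deriv_sProfile_mul_deriv_deriv_le (hγ : 0 < γ) (z : ℝ) :
    |deriv (sProfile γ) z * deriv (deriv (sProfile γ)) z| ≤ γ ^ 3 * exp (-2 * γ * |z|) := by
  set w := γ * z / 2
  have hc := (cosh_pos w).ne'
  have hw : -4 * |w| = -2 * γ * |z| := by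
    rw [abs_div, abs_mul, abs_of_pos hγ]; norm_num; ring
  have hprod : deriv (sProfile γ) z * deriv (deriv (sProfile γ)) z
      = -(γ ^ 3 / 16 * (sinh w / cosh w ^ 5)) := by
    rw [(hasDerivAt_deriv_sProfile γ z).deriv, deriv_sProfile]
    field_simp
    ring
  calc |deriv (sProfile γ) z * deriv (deriv (sProfile γ)) z|
      = γ ^ 3 / 16 * (|sinh w| / cosh w ^ 5) := by
        rw [hprod, abs_neg, abs_mul, abs_div, abs_div, abs_of_pos (pow_pos hγ 3),
          abs_of_pos (pow_pos (cosh_pos w) 5)]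
        norm_num
    _ ≤ γ ^ 3 / 16 * (16 * exp (-4 * |w|)) := by
        gcongr; exact abs_sinh_div_cosh_pow_five_le w
    _ = γ ^ 3 * exp (-2 * γ * |z|) := by rw [hw]; ring

end Profile

section RescaledProfile

variable (γ : ℝ) {ε : ℝ}

theorem xiZero_mul_deriv_xiZero (hε : ε ≠ 0) (r : ℝ) :
    xiZero γ ε r * deriv (xiZero γ ε) r
      = deriv (sProfile γ) (r / ε) * deriv (deriv (sProfile γ)) (r / ε) / ε := by
  have hscale : HasDerivAt (fun r : ℝ => r / ε) ε⁻¹ r := by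
    simpa using (hasDerivAt_id r).div_const ε
  have hxi : HasDerivAt (xiZero γ ε) (deriv (deriv (sProfile γ)) (r / ε) * ε⁻¹) r :=
    (hasDerivAt_deriv_sProfile γ (r / ε)).differentiableAt.hasDerivAt.comp r hscale
  rw [hxi.deriv, xiZero]
  field_simp

theorem abs_xiZero_mul_deriv_xiZero_le (hγ : 0 < γ) (hε : 0 < ε) (r : ℝ) :
    |xiZero γ ε r * deriv (xiZero γ ε) r| ≤ γ ^ 3 * exp (-2 * γ * |r| / ε) / ε := by
  have hexponent : -2 * γ * |r| / ε = -2 * γ * |r / ε| := by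
    rw [abs_div, abs_of_pos hε, mul_div_assoc]
  rw [xiZero_mul_deriv_xiZero γ hε.ne', abs_div, abs_of_pos hε, hexponent]
  gcongr
  exact abs_deriv_sProfile_mul_deriv_deriv_le γ hγ (r / ε)

theorem inv_xiZero_sq (hγ : γ ≠ 0) (r : ℝ) :
    (xiZero γ ε r ^ 2)⁻¹ = 16 / γ ^ 2 * cosh (γ / (2 * ε) * r) ^ 4 := by
  have hc := (cosh_pos (γ * (r / ε) / 2)).ne'
  rw [xiZero, deriv_sProfile, show γ / (2 * ε) * r = γ * (r / ε) / 2 by ring]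
  field_simp
  ring

end RescaledProfile

theorem cosh_pow_four (x : ℝ) :
    cosh x ^ 4 = 3 / 8 + cosh (2 * x) / 2 + cosh (4 * x) / 8 := by
  rw [show 4 * x = 2 * (2 * x) by ring, cosh_two_mul (2 * x), cosh_two_mul, sinh_two_mul]
  nlinarith [cosh_sq x]

theorem integral_cosh_pow_four (b : ℝ) :
    ∫ x in (0 : ℝ)..b, cosh x ^ 4 = 3 * b / 8 + sinh (2 * b) / 4 + sinh (4 * b) / 32 := by
  have hderiv : ∀ x ∈ Set.uIcc 0 b, HasDerivAt
      (fun x => 3 * x / 8 + sinh (2 * x) / 4 + sinh (4 * x) / 32) (cosh x ^ 4) x := by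
    intro x _
    have h2 := ((hasDerivAt_id x).const_mul 2).sinh
    have h4 := ((hasDerivAt_id x).const_mul 4).sinh
    refine ((((hasDerivAt_id x).const_mul 3).div_const 8).add (h2.div_const 4) |>.add
      (h4.div_const 32)).congr_deriv ?_
    simp only [id, cosh_pow_four]
    ring
  rw [intervalIntegral.integral_eq_sub_of_hasDerivAt hderiv
    ((by fun_prop : Continuous fun x => cosh x ^ 4).intervalIntegrable 0 b)]
  simp

theorem integral_cosh_mul_pow_four {a : ℝ} (ha : a ≠ 0) :
    ∫ r in (0 : ℝ)..1, cosh (a * r) ^ 4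
      = 3 / 8 + sinh (2 * a) / (4 * a) + sinh (4 * a) / (32 * a) := by
  rw [intervalIntegral.integral_comp_mul_left (fun x => cosh x ^ 4) ha, mul_zero, mul_one,
    integral_cosh_pow_four, smul_eq_mul]
  field_simp

theorem abs_integral_cosh_mul_pow_four_sub_le {a : ℝ} (ha : 0 < a) :
    |(∫ r in (0 : ℝ)..1, cosh (a * r) ^ 4) - exp (4 * a) / (64 * a)|
      ≤ 20 * (exp (4 * a) / (64 * a)) * exp (-2 * a) := by
  set E := exp (2 * a)
  have hE0 : 0 < E := exp_pos _
  have hE : 2 * a + 1 ≤ E := by linarith [add_one_le_exp (2 * a)]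
  have hE4 : exp (4 * a) = E ^ 2 := by rw [← exp_nat_mul]; ring_nf
  have hsinh2 : sinh (2 * a) = (E - E⁻¹) / 2 := by rw [sinh_eq, exp_neg]
  have hsinh4 : sinh (4 * a) = (E ^ 2 - (E ^ 2)⁻¹) / 2 := by rw [sinh_eq, exp_neg, hE4]
  have hexp : exp (-2 * a) = E⁻¹ := by rw [neg_mul, exp_neg]
  have herror : (∫ r in (0 : ℝ)..1, cosh (a * r) ^ 4) - exp (4 * a) / (64 * a)
      = (24 * a + 8 * E - 8 * E⁻¹ - E⁻¹ ^ 2) / (64 * a) := by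
    rw [integral_cosh_mul_pow_four ha.ne', hsinh2, hsinh4, hE4]
    field_simp
    ring
  have hinv_pos : 0 < E⁻¹ := inv_pos.2 hE0
  have hinv_le : E⁻¹ ≤ 1 := inv_le_one_of_one_le₀ (by linarith)
  rw [herror, hexp, hE4, abs_div, abs_of_pos (by positivity : (0 : ℝ) < 64 * a),
    show 20 * (E ^ 2 / (64 * a)) * E⁻¹ = 20 * E / (64 * a) by field_simp]
  gcongr
  -- `24a + 8E ≤ 20E` as `2a < E`, and `8E - 8E⁻¹ - E⁻² ≥ 8E - 9 ≥ -E` as `E ≥ 1`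
  rw [abs_le]
  constructor <;> nlinarith

theorem stmt15 (γ : ℝ) (hγ : 0 < γ) :
    ∃ C > (0 : ℝ), ∃ ε₀ > (0 : ℝ), ∀ ε : ℝ, 0 < ε → ε < ε₀ →
      |xiZero γ ε 1 * deriv (xiZero γ ε) 1| ≤ γ ^ 3 * Real.exp (-2 * γ / ε) / ε ∧
      |xiZero γ ε (-1) * deriv (xiZero γ ε) (-1)| ≤ γ ^ 3 * Real.exp (-2 * γ / ε) / ε ∧
      |(∫ r in (0 : ℝ)..1, ((xiZero γ ε r) ^ 2)⁻¹) -
          ε * Real.exp (2 * γ / ε) / (2 * γ ^ 3)| ≤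
        C * (ε * Real.exp (2 * γ / ε) / (2 * γ ^ 3)) * Real.exp (-γ / ε) := by
  refine ⟨20, by norm_num, 1, one_pos, fun ε hε _ => ⟨?_, ?_, ?_⟩⟩
  · simpa using abs_xiZero_mul_deriv_xiZero_le γ hγ hε 1
  · simpa using abs_xiZero_mul_deriv_xiZero_le γ hγ hε (-1)
  have hmain : ε * exp (2 * γ / ε) / (2 * γ ^ 3)
      = 16 / γ ^ 2 * (exp (2 * γ / ε) / (32 * γ / ε)) := by
    field_simp
    ring
  have hcosh := abs_integral_cosh_mul_pow_four_sub_le (a := γ / (2 * ε)) (by positivity)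
  rw [show 4 * (γ / (2 * ε)) = 2 * γ / ε by ring,
    show 64 * (γ / (2 * ε)) = 32 * γ / ε by ring,
    show -2 * (γ / (2 * ε)) = -γ / ε by ring] at hcosh
  simp only [inv_xiZero_sq γ hγ.ne', intervalIntegral.integral_const_mul, hmain]
  calc |16 / γ ^ 2 * (∫ r in (0 : ℝ)..1, cosh (γ / (2 * ε) * r) ^ 4)
        - 16 / γ ^ 2 * (exp (2 * γ / ε) / (32 * γ / ε))|
      = 16 / γ ^ 2 * |(∫ r in (0 : ℝ)..1, cosh (γ / (2 * ε) * r) ^ 4)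
          - exp (2 * γ / ε) / (32 * γ / ε)| := by
        rw [← mul_sub, abs_mul, abs_of_pos (by positivity)]
    _ ≤ 16 / γ ^ 2 * (20 * (exp (2 * γ / ε) / (32 * γ / ε)) * exp (-γ / ε)) := by gcongr
    _ = _ := by ring
end
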